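/- Every nonempty finite family of pairwise disjoint closed axis-aligned rectangles contained in the boundary B contains a rectangle that is free in some direction, i.e., a rectangle and a direction α such that its α-escape path is disjoint from every other rectangle of the family. Consequently, the peeling process assigns a level to every rectangle and the number of levels is at most the number of rectangles. -/

import Mathlib

/-- One of the four axis-aligned escape directions. -/
inductive Dir | left | right | up | down
deriving DecidableEq

instance : Fintype Dir :=
  ⟨{Dir.left, Dir.right, Dir.up, Dir.down}, fun x => by cases x <;> simp⟩

/-- A closed axis-aligned rectangle `[xmin,xmax] × [ymin,ymax]`. -/
structure Rect where
  xmin : ℝ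
  xmax : ℝ
  ymin : ℝ
  ymax : ℝ

/-- The point set of a rectangle. -/
def Rect.pts (r : Rect) : Set (ℝ × ℝ) :=
  {p | r.xmin ≤ p.1 ∧ p.1 ≤ r.xmax ∧ r.ymin ≤ p.2 ∧ p.2 ≤ r.ymax}

/-- The rectangle is a genuine (nonempty) closed rectangle. -/
def Rect.proper (r : Rect) : Prop := r.xmin ≤ r.xmax ∧ r.ymin ≤ r.ymax

/-- The boundary box `B = [0,W] × [0,H]`. -/
def boundaryBox (W H : ℝ) : Set (ℝ × ℝ) := {p | 0 ≤ p.1 ∧ p.1 ≤ W ∧ 0 ≤ p.2 ∧ p.2 ≤ H}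

/-- The rectangle is contained in the boundary box `[0,W] × [0,H]`. -/
def Rect.inB (W H : ℝ) (r : Rect) : Prop :=
  0 ≤ r.xmin ∧ r.xmax ≤ W ∧ 0 ≤ r.ymin ∧ r.ymax ≤ H

/-- The escape path of a rectangle in a given direction, inside `[0,W] × [0,H]`. -/
def Rect.escape (W H : ℝ) (r : Rect) : Dir → Set (ℝ × ℝ)
  | Dir.right => {p | r.xmin ≤ p.1 ∧ p.1 ≤ W ∧ r.ymin ≤ p.2 ∧ p.2 ≤ r.ymax}
  | Dir.left  => {p | 0 ≤ p.1 ∧ p.1 ≤ r.xmax ∧ r.ymin ≤ p.2 ∧ p.2 ≤ r.ymax}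
  | Dir.up    => {p | r.xmin ≤ p.1 ∧ p.1 ≤ r.xmax ∧ r.ymin ≤ p.2 ∧ p.2 ≤ H}
  | Dir.down  => {p | r.xmin ≤ p.1 ∧ p.1 ≤ r.xmax ∧ 0 ≤ p.2 ∧ p.2 ≤ r.ymax}

/-- Density at point `p` of the escape assignment `σ` restricted to the subfamily `S`. -/
noncomputable def density {n : ℕ} (W H : ℝ) (R : Fin n → Rect) (S : Set (Fin n))
    (σ : Fin n → Dir) (p : ℝ × ℝ) : ℕ :=
  {i | i ∈ S ∧ p ∈ (R i).escape W H (σ i)}.ncard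

/-- The optimal (minimum over assignments of the maximum over points of `B`) density of
the subfamily `S`. -/
noncomputable def optDensity {n : ℕ} (W H : ℝ) (R : Fin n → Rect) (S : Set (Fin n)) : ℕ :=
  sInf {k | ∃ σ : Fin n → Dir, ∀ p ∈ boundaryBox W H, density W H R S σ p ≤ k}

/-- `R j` blocks `R i` in direction `α`. -/
def blocks {n : ℕ} (W H : ℝ) (R : Fin n → Rect) (α : Dir) (j i : Fin n) : Prop :=
  j ≠ i ∧ ¬ Disjoint (R j).pts ((R i).escape W H α)

/-- `R i` is free in direction `α` within the subfamily `S`: no other rectangle of `S`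
blocks it in direction `α`. -/
def free {n : ℕ} (W H : ℝ) (R : Fin n → Rect) (S : Set (Fin n)) (i : Fin n) (α : Dir) : Prop :=
  ∀ j ∈ S, j ≠ i → Disjoint ((R i).escape W H α) (R j).pts

/-- `peel W H R ℓ` is the set of indices remaining after removing peeling levels `1,…,ℓ`. -/
def peel {n : ℕ} (W H : ℝ) (R : Fin n → Rect) : ℕ → Set (Fin n)
  | 0 => Set.univ
  | ℓ + 1 => {i ∈ peel W H R ℓ | ¬ ∃ α, free W H R (peel W H R ℓ) i α}

/-- The peeling level of rectangle `R i` (the least `ℓ` at which it has been removed). -/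
noncomputable def levelOf {n : ℕ} (W H : ℝ) (R : Fin n → Rect) (i : Fin n) : ℕ :=
  sInf {ℓ | i ∉ peel W H R ℓ}

/-- The number `ρ` of nonempty peeling levels. -/
noncomputable def numLevels {n : ℕ} (W H : ℝ) (R : Fin n → Rect) : ℕ :=
  sInf {ℓ | peel W H R ℓ = ∅}

/-! The rectangle of a subfamily with the highest top edge is free upward: a rectangle meeting its
upward escape path lies no higher, so it would meet the rectangle itself. Hence every nonempty
stage of the peeling loses a rectangle, and after `n` rounds nothing is left. -/

section Peeling

variable {n : ℕ} (W H : ℝ) {R : Fin n → Rect}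

lemma exists_free_up (hdisj : ∀ i j, i ≠ j → Disjoint (R i).pts (R j).pts)
    {S : Set (Fin n)} (hS : S.Nonempty) : ∃ i ∈ S, free W H R S i Dir.up := by
  obtain ⟨i, hiS, hmax⟩ := S.exists_max_image (fun i => (R i).ymax) S.toFinite hS
  refine ⟨i, hiS, fun j hjS hji => Set.disjoint_left.mpr fun p hp hpj => ?_⟩
  obtain ⟨hx₁, hx₂, hy₁, -⟩ := hp
  have hpi : p ∈ (R i).pts := ⟨hx₁, hx₂, hy₁, hpj.2.2.2.trans (hmax j hjS)⟩
  exact Set.disjoint_left.mp (hdisj i j hji.symm) hpi hpj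

lemma peel_succ_subset (ℓ : ℕ) : peel W H R (ℓ + 1) ⊆ peel W H R ℓ := fun _ h => h.1

lemma peel_succ_ssubset (hdisj : ∀ i j, i ≠ j → Disjoint (R i).pts (R j).pts) {ℓ : ℕ}
    (hne : (peel W H R ℓ).Nonempty) : peel W H R (ℓ + 1) ⊂ peel W H R ℓ := by
  obtain ⟨i, hi, hfree⟩ := exists_free_up W H hdisj hne
  exact ⟨peel_succ_subset W H ℓ, fun h => (h hi).2 ⟨Dir.up, hfree⟩⟩

lemma ncard_peel_le (hdisj : ∀ i j, i ≠ j → Disjoint (R i).pts (R j).pts) (ℓ : ℕ) :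
    (peel W H R ℓ).ncard ≤ n - ℓ := by
  induction ℓ with
  | zero => simp [peel, Set.ncard_univ]
  | succ ℓ ih =>
    rcases (peel W H R ℓ).eq_empty_or_nonempty with hempty | hne
    · simp [Set.subset_empty_iff.mp (hempty ▸ peel_succ_subset W H ℓ)]
    · have := Set.ncard_lt_ncard (peel_succ_ssubset W H hdisj hne)
      omega

lemma peel_eq_empty (hdisj : ∀ i j, i ≠ j → Disjoint (R i).pts (R j).pts) :
    peel W H R n = ∅ := by
  simpa [Set.ncard_eq_zero (Set.toFinite _)] using ncard_peel_le W H hdisj n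

end Peeling

theorem free_rectangle_exists_general {n : ℕ} (hn : 1 ≤ n) (W H : ℝ) (R : Fin n → Rect)
    (hdisj : ∀ i j, i ≠ j → Disjoint (R i).pts (R j).pts) :
    (∃ i α, free W H R Set.univ i α) ∧
    (∀ i, ∃ ℓ, i ∉ peel W H R ℓ) ∧
    numLevels W H R ≤ n := by
  have hempty := peel_eq_empty W H hdisj
  have : Nonempty (Fin n) := ⟨⟨0, hn⟩⟩
  obtain ⟨i, -, hfree⟩ := exists_free_up W H hdisj Set.univ_nonempty
  exact ⟨⟨i, Dir.up, hfree⟩, fun i => ⟨n, by simp [hempty]⟩, Nat.sInf_le hempty⟩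

/-- Every nonempty finite family of pairwise disjoint rectangles in `B`
contains a rectangle that is free in some direction; consequently the peeling process
assigns a level to every rectangle (every rectangle is eventually removed) and the number
of nonempty levels is at most the number of rectangles. -/
theorem free_rectangle_exists {n : ℕ} (hn : 1 ≤ n) (W H : ℝ) (R : Fin n → Rect)
    (hprop : ∀ i, (R i).proper) (hin : ∀ i, (R i).inB W H)
    (hdisj : ∀ i j, i ≠ j → Disjoint (R i).pts (R j).pts) :
    (∃ i α, free W H R Set.univ i α) ∧
    (∀ i, ∃ ℓ, i ∉ peel W H R ℓ) ∧
    numLevels W H R ≤ n :=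
  free_rectangle_exists_general hn W H R hdisj
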